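/- Let Σ be a finite relational signature, K a finite set of constants, G a finite nonempty tabloid over Σ and K, and T the undirected unraveling of G from any node. Then the structure 𝔄(T) is guarded bisimilar to some finite Σ-structure. -/

import Mathlib

open FirstOrder

namespace GFPaper

variable {L : FirstOrder.Language} {M N : Type*} {K V : Type*}

/-! ### Guarded sets, guarded tuples, partial isomorphisms, guarded bisimulations -/

/-- A guarded set of a `Σ`-structure is a nonempty (finite) subset contained in the set of
components of some tuple belonging to some relation of the structure. -/
def IsGuardedSet (SM : L.Structure M) (B : Set M) : Prop :=
  B.Nonempty ∧ ∃ (n : ℕ) (R : L.Relations n) (a : Fin n → M),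
    SM.RelMap R a ∧ B ⊆ Set.range a

/-- A guarded tuple is a tuple of pairwise distinct elements whose set of components is
a guarded set. -/
def IsGuardedTuple (SM : L.Structure M) {k : ℕ} (a : Fin k → M) : Prop :=
  Function.Injective a ∧ IsGuardedSet SM (Set.range a)

/-- A partial isomorphism between two `Σ`-structures: an injective map between finite subsets
preserving and reflecting all atomic relations.  The function `toFun` is total, but only its
restriction to `dom` is meaningful. -/
structure PartialIso (SM : L.Structure M) (SN : L.Structure N) where
  dom : Set M
  finite_dom : dom.Finite
  toFun : M → N
  injOn : Set.InjOn toFun dom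
  rel_iff : ∀ {n : ℕ} (R : L.Relations n) (a : Fin n → M), (∀ i, a i ∈ dom) →
    (SM.RelMap R a ↔ SN.RelMap R (fun i => toFun (a i)))

/-- The range of a partial isomorphism. -/
def PartialIso.rng {SM : L.Structure M} {SN : L.Structure N} (α : PartialIso SM SN) : Set N :=
  α.toFun '' α.dom

/-- A guarded bisimulation between two `Σ`-structures: a nonempty family of partial
isomorphisms between finite subsets satisfying the back-and-forth conditions over guarded
sets. -/
structure GuardedBisim (SM : L.Structure M) (SN : L.Structure N) where
  Z : Set (PartialIso SM SN)
  nonempty : Z.Nonempty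
  forth : ∀ α ∈ Z, ∀ B₀ : Set M, IsGuardedSet SM B₀ →
    ∃ γ ∈ Z, B₀ ⊆ γ.dom ∧ ∀ x ∈ α.dom ∩ γ.dom, α.toFun x = γ.toFun x
  back : ∀ α ∈ Z, ∀ B₁ : Set N, IsGuardedSet SN B₁ →
    ∃ γ ∈ Z, B₁ ⊆ γ.rng ∧ ∀ x ∈ α.dom, ∀ y ∈ γ.dom, α.toFun x = γ.toFun y → x = y

/-- `𝔄₀,ā ∼_g 𝔄₁,b̄` : some guarded bisimulation contains the map `ā ↦ b̄`. -/
def GBisimTuple (SM : L.Structure M) (SN : L.Structure N) {k : ℕ}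
    (a : Fin k → M) (b : Fin k → N) : Prop :=
  ∃ (Z : GuardedBisim SM SN) (α : PartialIso SM SN), α ∈ Z.Z ∧
    α.dom = Set.range a ∧ ∀ i, α.toFun (a i) = b i

/-- Guarded bisimilarity has finite index on the guarded tuples of a structure:
there is a finite set of guarded tuples such that every guarded tuple is guarded bisimilar
to one of them. -/
def FiniteGBisimIndex (SM : L.Structure M) : Prop :=
  ∃ S : Set (Σ k : ℕ, Fin k → M), S.Finite ∧
    ∀ ⦃k : ℕ⦄ (a : Fin k → M), IsGuardedTuple SM a →
      ∃ b : Fin k → M, (⟨k, b⟩ : Σ k : ℕ, Fin k → M) ∈ S ∧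
        IsGuardedTuple SM b ∧ GBisimTuple SM SM a b

/-! ### Undirected unraveling and undirected bisimulation -/

/-- `t` extends `s` by one edge (i.e. `s` is obtained from `t` by deleting its last node). -/
def ExtendsBy (G : SimpleGraph V) (v₀ : V) (s t : Σ u : V, G.Walk v₀ u) : Prop :=
  ∃ h : G.Adj s.1 t.1, t.2 = s.2.concat h

/-- The undirected unraveling of a graph `G` from a node `v₀`: nodes are the finite walks
of `G` starting at `v₀`, and edges join each walk of positive length to the walk obtained
by deleting its last node. -/
def unraveling (G : SimpleGraph V) (v₀ : V) : SimpleGraph (Σ u : V, G.Walk v₀ u) where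
  Adj s t := ExtendsBy G v₀ s t ∨ ExtendsBy G v₀ t s
  symm := ⟨fun _ _ h => Or.symm h⟩
  loopless := ⟨fun s h => by
    rcases h with ⟨h, _⟩ | ⟨h, _⟩ <;> exact G.loopless.irrefl s.1 h⟩

/-- The projection sending a node of the unraveling (a walk) to its terminal node. -/
def unravelingProj (G : SimpleGraph V) (v₀ : V) : (Σ u : V, G.Walk v₀ u) → V :=
  fun s => s.1

/-- An undirected bisimulation between node-labelled undirected graphs. -/
def IsUndirectedBisim {V₀ V₁ Λ : Type*} (G₀ : SimpleGraph V₀) (G₁ : SimpleGraph V₁)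
    (ℓ₀ : V₀ → Λ) (ℓ₁ : V₁ → Λ) (Z : Set (V₀ × V₁)) : Prop :=
  ∀ p ∈ Z, ℓ₀ p.1 = ℓ₁ p.2 ∧
    (∀ w₀, G₀.Adj p.1 w₀ → ∃ w₁, G₁.Adj p.2 w₁ ∧ (w₀, w₁) ∈ Z) ∧
    (∀ w₁, G₁.Adj p.2 w₁ → ∃ w₀, G₀.Adj p.1 w₀ ∧ (w₀, w₁) ∈ Z)

/-! ### Tabloids -/

/-- A tabloid over a relational signature `L` and a set `K` of constant names: an undirected
graph where every node `v` carries a set `consts v ⊆ K` of constants and an atomic type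
over `consts v`, encoded as the collection `rel v` of atomic facts over `consts v`; the
types of adjacent nodes agree over their common constants. -/
structure Tabloid (L : FirstOrder.Language) (K : Type*) (V : Type*) where
  graph : SimpleGraph V
  consts : V → Set K
  rel : ∀ (_v : V) {n : ℕ}, L.Relations n → (Fin n → K) → Prop
  rel_mem : ∀ (v : V) {n : ℕ} (R : L.Relations n) (c : Fin n → K),
    rel v R c → ∀ i, c i ∈ consts v
  compat : ∀ (v w : V), graph.Adj v w → ∀ {n : ℕ} (R : L.Relations n) (c : Fin n → K),
    (∀ i, c i ∈ consts v ∩ consts w) → (rel v R c ↔ rel w R c)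

namespace Tabloid

variable (T : Tabloid L K V)

/-- The pairs `(v, c)` with `v` a node and `c` one of its constants. -/
def Pairs : Type _ := {q : V × K // q.2 ∈ T.consts q.1}

/-- The relation `(v,c) ≈ (v',c')` iff `c = c'` and `c` belongs to the constants of every
node on the (unique, when the tabloid is a tree) path connecting `v` and `v'`. -/
def keq (p q : T.Pairs) : Prop :=
  p.1.2 = q.1.2 ∧
    ∀ w : T.graph.Walk p.1.1 q.1.1, w.IsPath → ∀ z ∈ w.support, p.1.2 ∈ T.consts z

/-- The set of nodes `v` witnessing simultaneously the classes `[v_i, c_i]`, i.e. such that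
`c_i ∈ K_v` and `[v, c_i] = [v_i, c_i]` for all `i`. -/
def classSet {n : ℕ} (p : Fin n → T.Pairs) : Set V :=
  {v | ∀ i, ∃ h : (p i).1.2 ∈ T.consts v,
    Quot.mk T.keq ⟨((v, (p i).1.2) : V × K), h⟩ = Quot.mk T.keq (p i)}

/-- The structure `𝔄(T)` associated to a (tree) tabloid: the universe is the set of
`≈`-classes `[v,c]`, and a tuple satisfies a relation iff some single node witnesses all
classes and its atomic type contains the corresponding fact. -/
def AT [L.IsRelational] : L.Structure (Quot T.keq) where
  funMap := fun f _ => isEmptyElim f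
  RelMap := fun {n} R x =>
    ∃ (v : V) (c : Fin n → K) (h : ∀ i, c i ∈ T.consts v),
      (∀ i, Quot.mk T.keq ⟨((v, c i) : V × K), h i⟩ = x i) ∧ T.rel v R c

/-- The undirected unraveling of a tabloid from a node: the unraveling of the underlying
graph, each walk carrying the labels of its terminal node. -/
def unravel (v₀ : V) : Tabloid L K (Σ u : V, T.graph.Walk v₀ u) where
  graph := unraveling T.graph v₀
  consts := fun s => T.consts s.1
  rel := fun s => T.rel s.1
  rel_mem := fun s _ R c h i => T.rel_mem s.1 R c h i
  compat := by
    rintro s t (⟨h, _⟩ | ⟨h, _⟩) n R c hc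
    · exact T.compat s.1 t.1 h R c hc
    · exact (T.compat t.1 s.1 h R c (fun i => ⟨(hc i).2, (hc i).1⟩)).symm

/-- An isomorphism of a tabloid onto itself: a graph automorphism preserving both labels. -/
structure Auto where
  toEquiv : V ≃ V
  adj_iff : ∀ z z', T.graph.Adj z z' ↔ T.graph.Adj (toEquiv z) (toEquiv z')
  consts_eq : ∀ z, T.consts (toEquiv z) = T.consts z
  rel_iff : ∀ (z : V) {n : ℕ} (R : L.Relations n) (c : Fin n → K),
    T.rel (toEquiv z) R c ↔ T.rel z R c

end Tabloid

/-! ### The tabloid built from a finite model -/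

/-- `χ` is the graph of a function. -/
def IsFunGraph (χ : Set (M × K)) : Prop :=
  ∀ ⦃a b b'⦄, (a, b) ∈ χ → (a, b') ∈ χ → b = b'

/-- `χ` is the graph of an injective (partial) function. -/
def IsInjGraph (χ : Set (M × K)) : Prop :=
  ∀ ⦃a a' b⦄, (a, b) ∈ χ → (a', b) ∈ χ → a = a'

/-- The vertices of the tabloid built from a structure: injections `χ : A → K` with `A`
a guarded set, encoded via their graphs. -/
def ChiVertex (SM : L.Structure M) (K : Type*) : Type _ :=
  {χ : Set (M × K) // IsFunGraph χ ∧ IsInjGraph χ ∧ IsGuardedSet SM {a | ∃ b, (a, b) ∈ χ}}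

/-- The constants of the vertex `χ`: the range of `χ`. -/
def chiConsts {SM : L.Structure M} (χ : ChiVertex SM K) : Set K :=
  {b | ∃ a, (a, b) ∈ χ.1}

/-- The atomic type of the vertex `χ`: the image under `χ` of the atomic type of its
domain in the structure. -/
def chiRel {SM : L.Structure M} (χ : ChiVertex SM K) {n : ℕ}
    (R : L.Relations n) (c : Fin n → K) : Prop :=
  ∃ a : Fin n → M, (∀ i, (a i, c i) ∈ χ.1) ∧ SM.RelMap R a

/-- Adjacency of vertices: `χ ∪ χ'` is an injective function (and `χ ≠ χ'`). -/
def chiAdj {SM : L.Structure M} (χ χ' : ChiVertex SM K) : Prop :=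
  χ ≠ χ' ∧ IsFunGraph (χ.1 ∪ χ'.1) ∧ IsInjGraph (χ.1 ∪ χ'.1)

/-! ### The guarded fragment of first-order logic -/

/-- Formulas of the guarded fragment of first-order logic over a relational signature `L`,
with variables drawn from `ℕ`: atomic formulas (including equalities), Boolean connectives,
and guarded quantification `∃ȳ (R(x̄ȳ) ∧ φ)` and `∀ȳ (R(x̄ȳ) → φ)`. -/
inductive GFormula (L : FirstOrder.Language) : Type _ where
  | equal : ℕ → ℕ → GFormula L
  | rel : ∀ {n : ℕ}, L.Relations n → (Fin n → ℕ) → GFormula L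
  | not : GFormula L → GFormula L
  | and : GFormula L → GFormula L → GFormula L
  | or : GFormula L → GFormula L → GFormula L
  | exGuard : ∀ {n : ℕ}, L.Relations n → (Fin n → ℕ) → Set ℕ → GFormula L → GFormula L
  | allGuard : ∀ {n : ℕ}, L.Relations n → (Fin n → ℕ) → Set ℕ → GFormula L → GFormula L

namespace GFormula

/-- The free variables of a formula. -/
def free : GFormula L → Set ℕ
  | equal i j => {i, j}
  | rel _ ts => Set.range ts
  | not φ => φ.free
  | and φ ψ => φ.free ∪ ψ.free
  | or φ ψ => φ.free ∪ ψ.free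
  | exGuard _ ts ys φ => (Set.range ts ∪ φ.free) \ ys
  | allGuard _ ts ys φ => (Set.range ts ∪ φ.free) \ ys

/-- Well-formedness for the guarded fragment: in every guarded quantification
`∃ȳ (R(x̄ȳ) ∧ φ)` resp. `∀ȳ (R(x̄ȳ) → φ)` the guard atom contains all free variables
of `φ` as well as all quantified variables. -/
def IsGF : GFormula L → Prop
  | equal _ _ => True
  | rel _ _ => True
  | not φ => φ.IsGF
  | and φ ψ => φ.IsGF ∧ ψ.IsGF
  | or φ ψ => φ.IsGF ∧ ψ.IsGF
  | exGuard _ ts ys φ => φ.free ⊆ Set.range ts ∧ ys ⊆ Set.range ts ∧ φ.IsGF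
  | allGuard _ ts ys φ => φ.free ⊆ Set.range ts ∧ ys ⊆ Set.range ts ∧ φ.IsGF

/-- Satisfaction of a guarded formula in a structure under a variable assignment. -/
def Sat (SM : L.Structure M) : GFormula L → (ℕ → M) → Prop
  | equal i j, β => β i = β j
  | rel R ts, β => SM.RelMap R (fun i => β (ts i))
  | not φ, β => ¬ Sat SM φ β
  | and φ ψ, β => Sat SM φ β ∧ Sat SM ψ β
  | or φ ψ, β => Sat SM φ β ∨ Sat SM ψ β
  | exGuard R ts ys φ, β => ∃ β' : ℕ → M, (∀ x ∉ ys, β' x = β x) ∧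
      SM.RelMap R (fun i => β' (ts i)) ∧ Sat SM φ β'
  | allGuard R ts ys φ, β => ∀ β' : ℕ → M, (∀ x ∉ ys, β' x = β x) →
      SM.RelMap R (fun i => β' (ts i)) → Sat SM φ β'

/-- Every subformula of `φ` has at most `n` free variables. -/
def WidthLE (n : ℕ) : GFormula L → Prop
  | equal i j => (({i, j} : Set ℕ)).ncard ≤ n
  | rel _ ts => (Set.range ts).ncard ≤ n
  | not φ => φ.WidthLE n
  | and φ ψ => (φ.free ∪ ψ.free).ncard ≤ n ∧ φ.WidthLE n ∧ ψ.WidthLE n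
  | or φ ψ => (φ.free ∪ ψ.free).ncard ≤ n ∧ φ.WidthLE n ∧ ψ.WidthLE n
  | exGuard _ ts _ φ => (Set.range ts ∪ φ.free).ncard ≤ n ∧ φ.WidthLE n
  | allGuard _ ts _ φ => (Set.range ts ∪ φ.free).ncard ≤ n ∧ φ.WidthLE n

end GFormula


/-!
The unraveling is a tree: a walk is adjacent to at most one shorter walk, namely itself without
its last edge. Hence two pairs `(s, c)` and `(t, c)` are identified in `𝔄(T)` iff `c` is
carried (belongs to the labels of every vertex) along some walk from `s` to `t`, and the atomic
facts of `𝔄(T)` among the constants of one node are exactly those of its type.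

The finite partner is a mod-2 cover of `G`: triples `(x, h, c)` with `h` a vector of edge
parities, where `(x, h, c)` is identified with `(y, h + π, c)` whenever `c` is carried along a walk
`x → y` of edge-parity vector `π`. Its atomic facts among the constants of one vertex are again
those of the type, because constants carried one at a time along walks of the same parity `π` are
carried jointly along a single walk: every edge of odd parity lies on each of these walks, and the
edges of odd parity, having odd degree exactly at `x` and `y`, contain a walk from `x` to `y`.

The guarded bisimulation consists of the maps sending the constants of a node `u` of `T` to those
of its base vertex at an arbitrary parity label `h`. A forth step from `u` to `w` shifts `h` by the
parity of the tree path `u → w`; a back step to a vertex `y` with label `h'` extends `u` by a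
joint walk to `y` of parity `h' - h`.
-/

theorem _root_.SimpleGraph.isAcyclic_of_lower_neighbor_unique {α : Type*} {Γ : SimpleGraph α}
    (d : α → ℕ) (hne : ∀ ⦃x y⦄, Γ.Adj x y → d x ≠ d y)
    (hlower : ∀ ⦃x y z⦄, Γ.Adj x z → Γ.Adj y z → d x < d z → d y < d z → x = y) :
    Γ.IsAcyclic := by
  classical
  intro v c hc
  -- rotate the cycle to start at a vertex `m` of maximal `d`: its two neighbours on it coincide
  obtain ⟨m, hm, hmax⟩ := c.support.toFinset.exists_max_image d ⟨v, by simp⟩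
  rw [List.mem_toFinset] at hm
  set c' := c.rotate m hm
  have hc' : c'.IsCycle := hc.rotate hm
  have hlt : ∀ x ∈ c'.support, Γ.Adj x m → d x < d m := fun x hx hadj =>
    lt_of_le_of_ne (hmax x (List.mem_toFinset.mpr ((c.mem_support_rotate_iff m hm).mp hx)))
      (hne hadj)
  exact hc'.snd_ne_penultimate <| hlower (c'.adj_snd hc'.not_nil).symm
    (c'.adj_penultimate hc'.not_nil)
    (hlt _ (c'.getVert_mem_support 1) (c'.adj_snd hc'.not_nil).symm)
    (hlt _ (c'.getVert_mem_support _) (c'.adj_penultimate hc'.not_nil))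

open SimpleGraph

section Unraveling

variable {G : SimpleGraph V} {v₀ : V}

theorem ExtendsBy.length_eq {s t : Σ u, G.Walk v₀ u} (h : ExtendsBy G v₀ s t) :
    t.2.length = s.2.length + 1 := by
  obtain ⟨_, e⟩ := h
  rw [e, Walk.length_concat]

theorem ExtendsBy.left_unique {s s' t : Σ u, G.Walk v₀ u} (h : ExtendsBy G v₀ s t)
    (h' : ExtendsBy G v₀ s' t) : s = s' := by
  obtain ⟨x, p⟩ := s
  obtain ⟨x', p'⟩ := s'
  obtain ⟨ha, e⟩ := h
  obtain ⟨ha', e'⟩ := h'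
  obtain ⟨hx, hp⟩ := Walk.concat_inj (e.symm.trans e')
  dsimp only at hx hp
  subst hx
  rw [Walk.copy_rfl_rfl] at hp
  rw [hp]

theorem extendsBy_of_adj_of_length_lt {s t : Σ u, G.Walk v₀ u} (h : (unraveling G v₀).Adj s t)
    (hlt : s.2.length < t.2.length) : ExtendsBy G v₀ s t := by
  refine h.resolve_right fun h' => ?_
  have := ExtendsBy.length_eq h'
  omega

theorem unraveling_adj_concat {u w : V} (p : G.Walk v₀ u) (h : G.Adj u w) :
    (unraveling G v₀).Adj ⟨u, p⟩ ⟨w, p.concat h⟩ :=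
  Or.inl ⟨h, rfl⟩

theorem unraveling_reachable_root {u : V} (p : G.Walk v₀ u) :
    (unraveling G v₀).Reachable ⟨v₀, .nil⟩ ⟨u, p⟩ := by
  induction p using Walk.concatRec with
  | Hnil => rfl
  | Hconcat p h ih => exact ih.trans (unraveling_adj_concat p h).reachable

theorem isTree_unraveling (G : SimpleGraph V) (v₀ : V) : (unraveling G v₀).IsTree where
  connected := by
    have : Nonempty (Σ u, G.Walk v₀ u) := ⟨⟨v₀, .nil⟩⟩
    exact (connected_iff_exists_forall_reachable _).mpr
      ⟨⟨v₀, .nil⟩, fun s => unraveling_reachable_root s.2⟩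
  isAcyclic := isAcyclic_of_lower_neighbor_unique (fun s => s.2.length)
    (fun s t h => by rcases h with h | h <;> have := ExtendsBy.length_eq h <;> omega)
    (fun _ _ _ h h' hs hs' =>
      (extendsBy_of_adj_of_length_lt h hs).left_unique (extendsBy_of_adj_of_length_lt h' hs'))

theorem unraveling_exists_walk_lift {b x : V} (w₀ : G.Walk v₀ b) (ω : G.Walk b x) :
    ∃ W : (unraveling G v₀).Walk ⟨b, w₀⟩ ⟨x, w₀.append ω⟩,
      W.support.map Sigma.fst = ω.support := by
  induction ω with
  | nil => exact ⟨Walk.nil.copy rfl (by rw [Walk.append_nil]), by simp⟩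
  | @cons b m x h ω ih =>
    obtain ⟨W, hW⟩ := ih (w₀.concat h)
    refine ⟨.cons (unraveling_adj_concat w₀ h) (W.copy rfl (by rw [Walk.concat_append])), ?_⟩
    rw [Walk.support_cons, Walk.support_copy, List.map_cons, hW, Walk.support_cons]

def unravelingHom (G : SimpleGraph V) (v₀ : V) : unraveling G v₀ →g G where
  toFun := unravelingProj G v₀
  map_rel' := by
    rintro s t (⟨h, _⟩ | ⟨h, _⟩)
    exacts [h, h.symm]

end Unraveling

namespace Tabloid

section Carries

variable (T : Tabloid L K V)

def Carries (c : K) {x y : V} (ω : T.graph.Walk x y) : Prop :=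
  ∀ z ∈ ω.support, c ∈ T.consts z

def cls (v : V) (c : K) (hc : c ∈ T.consts v) : Quot T.keq :=
  Quot.mk _ (⟨(v, c), hc⟩ : T.Pairs)

def cst : Quot T.keq → K := Quot.lift (fun p => p.1.2) fun _ _ h => h.1

variable {T} {c : K}

theorem Carries.mem_start {x y : V} {ω : T.graph.Walk x y} (h : T.Carries c ω) :
    c ∈ T.consts x :=
  h x ω.start_mem_support

theorem carries_nil {x : V} (h : c ∈ T.consts x) : T.Carries c (Walk.nil : T.graph.Walk x x) := by
  simpa [Carries] using h

theorem Carries.reverse {x y : V} {ω : T.graph.Walk x y} (h : T.Carries c ω) :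
    T.Carries c ω.reverse := fun z hz => h z (by simpa using hz)

theorem Carries.append {x y z : V} {ω : T.graph.Walk x y} {ω' : T.graph.Walk y z}
    (h : T.Carries c ω) (h' : T.Carries c ω') : T.Carries c (ω.append ω') := fun v hv => by
  rcases (Walk.mem_support_append_iff _ _).mp hv with hv | hv
  exacts [h v hv, h' v hv]

theorem rel_of_carries {x y : V} (ω : T.graph.Walk x y) {n : ℕ} {R : L.Relations n}
    {cs : Fin n → K} (hω : ∀ i, T.Carries (cs i) ω) (h : T.rel x R cs) : T.rel y R cs := by
  induction ω with
  | nil => exact h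
  | @cons x m y hadj ω ih =>
    refine ih (fun i z hz => hω i z (by simp [hz])) ((T.compat x m hadj R cs fun i => ?_).mp h)
    exact ⟨hω i x (by simp), hω i m (by simp)⟩

end Carries

section IsTree

variable {T : Tabloid L K V} (hT : T.graph.IsTree)
include hT

theorem keq_iff_exists_carries (p q : T.Pairs) :
    T.keq p q ↔ p.1.2 = q.1.2 ∧ ∃ ω : T.graph.Walk p.1.1 q.1.1, T.Carries p.1.2 ω := by
  classical
  refine ⟨fun h => ⟨h.1, ?_⟩, fun ⟨hc, ω, hω⟩ => ⟨hc, fun w hw z hz => ?_⟩⟩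
  · obtain ⟨ω⟩ := hT.connected p.1.1 q.1.1
    exact ⟨ω.bypass, h.2 _ ω.bypass_isPath⟩
  · have : w = ω.bypass := congrArg Subtype.val
      ((hT.isAcyclic.subsingleton_path _ _).elim ⟨w, hw⟩ ⟨_, ω.bypass_isPath⟩)
    subst this
    exact hω z (Walk.support_bypass_subset_support _ hz)

theorem keq_equivalence : Equivalence T.keq where
  refl p := (keq_iff_exists_carries hT p p).mpr ⟨rfl, .nil, carries_nil p.2⟩
  symm {p q} h := by
    obtain ⟨hc, ω, hω⟩ := (keq_iff_exists_carries hT p q).mp h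
    exact (keq_iff_exists_carries hT q p).mpr ⟨hc.symm, ω.reverse, hc ▸ hω.reverse⟩
  trans {p q r} h h' := by
    obtain ⟨hc, ω, hω⟩ := (keq_iff_exists_carries hT p q).mp h
    obtain ⟨hc', ω', hω'⟩ := (keq_iff_exists_carries hT q r).mp h'
    exact (keq_iff_exists_carries hT p r).mpr ⟨hc.trans hc', ω.append ω', hω.append (hc ▸ hω')⟩

theorem mk_eq_mk_iff {p q : T.Pairs} : Quot.mk T.keq p = Quot.mk T.keq q ↔ T.keq p q :=
  Quot.eq.trans (keq_equivalence hT).eqvGen_iff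

theorem cls_eq_cls_iff {v v' : V} {c : K} (hc : c ∈ T.consts v) (hc' : c ∈ T.consts v') :
    T.cls v c hc = T.cls v' c hc' ↔ ∃ ω : T.graph.Walk v v', T.Carries c ω :=
  (mk_eq_mk_iff hT).trans ((keq_iff_exists_carries hT _ _).trans (and_iff_right rfl))

theorem Carries.of_cls_eq {v v' : V} {c : K} {hc : c ∈ T.consts v} {hc' : c ∈ T.consts v'}
    (h : T.cls v c hc = T.cls v' c hc') {ω : T.graph.Walk v v'} (hω : ω.IsPath) :
    T.Carries c ω :=
  ((mk_eq_mk_iff hT).mp h).2 ω hω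

theorem AT_relMap_cls_iff [L.IsRelational] {v : V} {n : ℕ} (R : L.Relations n)
    (cs : Fin n → K) (hcs : ∀ i, cs i ∈ T.consts v) :
    T.AT.RelMap R (fun i => T.cls v (cs i) (hcs i)) ↔ T.rel v R cs := by
  classical
  refine ⟨fun ⟨w, cs', hcs', hcls, hrel⟩ => ?_, fun h => ⟨v, cs, hcs, fun _ => rfl, h⟩⟩
  obtain rfl : cs' = cs := funext fun i => congrArg T.cst (hcls i)
  obtain ⟨ω⟩ := hT.connected w v
  exact rel_of_carries ω.bypass (fun i => Carries.of_cls_eq hT (hcls i) ω.bypass_isPath) hrel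

end IsTree

section Unravel

variable (G : Tabloid L K V) {v₀ : V}

theorem isTree_unravel (v₀ : V) : (G.unravel v₀).graph.IsTree :=
  isTree_unraveling G.graph v₀

theorem unravel_cls_eq_of_carries {b x : V} (w₀ : G.graph.Walk v₀ b) {ω : G.graph.Walk b x}
    {c : K} (hω : G.Carries c ω) (hb : c ∈ G.consts b) (hx : c ∈ G.consts x) :
    (G.unravel v₀).cls ⟨b, w₀⟩ c hb = (G.unravel v₀).cls ⟨x, w₀.append ω⟩ c hx := by
  obtain ⟨W, hW⟩ := unraveling_exists_walk_lift w₀ ω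
  refine (cls_eq_cls_iff (G.isTree_unravel v₀) hb hx).mpr ⟨W, fun z hz => hω z.1 ?_⟩
  rw [← hW]
  exact List.mem_map_of_mem hz

variable {G}

theorem Carries.map_unravelingHom {c : K} {s t : Σ u, G.graph.Walk v₀ u}
    {P : (unraveling G.graph v₀).Walk s t} (h : (G.unravel v₀).Carries c P) :
    G.Carries c (P.map (unravelingHom G.graph v₀)) := by
  intro z hz
  rw [Walk.support_map] at hz
  obtain ⟨z', hz', rfl⟩ := List.mem_map.mp hz
  exact h z' hz'

end Unravel

end Tabloid

section EdgeParity

variable [DecidableEq V] {G : SimpleGraph V}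

def _root_.SimpleGraph.Walk.edgeParity {x y : V} (ω : G.Walk x y) : Sym2 V → ZMod 2 :=
  fun e => (ω.edges.count e : ZMod 2)

@[simp] theorem _root_.SimpleGraph.Walk.edgeParity_nil {x : V} :
    (Walk.nil : G.Walk x x).edgeParity = 0 :=
  rfl

theorem _root_.SimpleGraph.Walk.edgeParity_cons {x m y : V} (h : G.Adj x m) (ω : G.Walk m y) :
    (Walk.cons h ω).edgeParity = Pi.single s(x, m) 1 + ω.edgeParity := by
  funext e
  by_cases he : s(x, m) = e
  · subst he
    simp [Walk.edgeParity, add_comm]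
  · simp [Walk.edgeParity, he, Ne.symm he]

theorem _root_.SimpleGraph.Walk.edgeParity_append {x y z : V} (ω : G.Walk x y)
    (ω' : G.Walk y z) : (ω.append ω').edgeParity = ω.edgeParity + ω'.edgeParity := by
  funext e
  simp [Walk.edgeParity, Walk.edges_append]

theorem _root_.SimpleGraph.Walk.edgeParity_reverse {x y : V} (ω : G.Walk x y) :
    ω.reverse.edgeParity = ω.edgeParity := by
  funext e
  simp [Walk.edgeParity, Walk.edges_reverse]

theorem _root_.SimpleGraph.Walk.mem_edges_of_edgeParity_ne_zero {x y : V} {ω : G.Walk x y}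
    {e : Sym2 V} (h : ω.edgeParity e ≠ 0) : e ∈ ω.edges := by
  by_contra he
  exact h (by simp [Walk.edgeParity, List.count_eq_zero_of_not_mem he])

variable [Fintype V]

def parityDegree (f : Sym2 V → ZMod 2) : V → ZMod 2 :=
  fun x => ∑ e, if x ∈ e then f e else 0

theorem parityDegree_add (f g : Sym2 V → ZMod 2) :
    parityDegree (f + g) = parityDegree f + parityDegree g := by
  funext x
  simp only [parityDegree, Pi.add_apply, ← Finset.sum_add_distrib]
  exact Finset.sum_congr rfl fun e _ => by split_ifs <;> simp

theorem parityDegree_single_edge {x y : V} (hxy : x ≠ y) :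
    parityDegree (Pi.single s(x, y) 1) = Pi.single x 1 + Pi.single y 1 := by
  funext z
  have h : ∀ e, (if z ∈ e then (Pi.single s(x, y) 1 : Sym2 V → ZMod 2) e else 0) =
      (Pi.single s(x, y) (if z ∈ s(x, y) then 1 else 0) : Sym2 V → ZMod 2) e := by
    intro e
    by_cases he : e = s(x, y) <;> simp [he]
  rw [parityDegree, Finset.sum_congr rfl fun e _ => h e, Finset.sum_pi_single']
  simp only [Finset.mem_univ, if_true, Sym2.mem_iff, Pi.add_apply, Pi.single_apply]
  by_cases hzx : z = x <;> by_cases hzy : z = y <;> simp_all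

theorem _root_.SimpleGraph.Walk.parityDegree_edgeParity {x y : V} (ω : G.Walk x y) :
    parityDegree ω.edgeParity = Pi.single x 1 + Pi.single y 1 := by
  induction ω with
  | nil => funext; simp [parityDegree, ZModModule.add_self]
  | @cons x m y h ω ih =>
    rw [Walk.edgeParity_cons, parityDegree_add, parityDegree_single_edge h.ne, ih, add_assoc,
      ← add_assoc (Pi.single m 1), ZModModule.add_self, zero_add]

theorem exists_walk_of_parityDegree_eq (f : Sym2 V → ZMod 2)
    (hf : ∀ e, f e ≠ 0 → e ∈ G.edgeSet) {a b : V} (hab : a ≠ b)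
    (hdeg : parityDegree f = Pi.single a 1 + Pi.single b 1) :
    ∃ ω : G.Walk a b, ∀ z ∈ ω.support, ∃ e, f e ≠ 0 ∧ z ∈ e := by
  induction hn : (Finset.univ.filter (f · ≠ 0)).card using Nat.strong_induction_on
    generalizing f a with
  | _ n ih =>
  obtain ⟨e, hae, hfe⟩ : ∃ e, a ∈ e ∧ f e ≠ 0 := by
    by_contra! hcon
    have := congrFun hdeg a
    simp [parityDegree, hab, Finset.sum_eq_zero fun e _ => ite_eq_right_iff.mpr (hcon e)] at this
  obtain ⟨z, rfl⟩ := Sym2.mem_iff_exists.mp hae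
  have hadj : G.Adj a z := hf _ hfe
  by_cases hzb : z = b
  · subst hzb
    refine ⟨.cons hadj .nil, fun v hv => ⟨s(a, z), hfe, ?_⟩⟩
    simp only [Walk.support_cons, Walk.support_nil, List.mem_cons, List.not_mem_nil] at hv
    rcases hv with rfl | rfl | h
    exacts [Sym2.mem_mk_left _ _, Sym2.mem_mk_right _ _, h.elim]
  -- remove the edge `s(a, z)` and continue from `z`
  set f' := f + Pi.single s(a, z) 1
  have hf'_of_ne : ∀ e, e ≠ s(a, z) → f' e = f e := fun e he => by simp [f', he]
  have hf'_ne : ∀ e, f' e ≠ 0 → e ≠ s(a, z) ∧ f e ≠ 0 := by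
    intro e he
    have hne : e ≠ s(a, z) := by
      rintro rfl
      simp [f', Fin.eq_one_of_ne_zero _ hfe] at he
      exact he rfl
    exact ⟨hne, hf'_of_ne e hne ▸ he⟩
  have hcard : (Finset.univ.filter (f' · ≠ 0)).card < n := by
    rw [← hn]
    refine Finset.card_lt_card ⟨fun e he => ?_, fun hsub => ?_⟩
    · simp only [Finset.mem_filter, Finset.mem_univ, true_and] at he ⊢
      exact (hf'_ne e he).2
    · have := hsub (Finset.mem_filter.mpr ⟨Finset.mem_univ _, hfe⟩)
      exact (hf'_ne _ (Finset.mem_filter.mp this).2).1 rfl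
  have hdeg' : parityDegree f' = Pi.single z 1 + Pi.single b 1 := by
    rw [parityDegree_add, hdeg, parityDegree_single_edge hadj.ne, add_comm (Pi.single a 1),
      add_assoc, ← add_assoc (Pi.single a 1), ZModModule.add_self, zero_add, add_comm]
  obtain ⟨ω, hω⟩ := ih _ hcard f' (fun e he => hf e (hf'_ne e he).2) hzb hdeg' rfl
  refine ⟨.cons hadj ω, fun v hv => ?_⟩
  rcases List.mem_cons.mp (Walk.support_cons _ _ ▸ hv) with rfl | hv
  · exact ⟨_, hfe, Sym2.mem_mk_left _ _⟩
  · obtain ⟨e, he, hve⟩ := hω v hv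
    exact ⟨e, (hf'_ne e he).2, hve⟩

theorem Tabloid.exists_walk_carries_of_edgeParity_eq (T : Tabloid L K V) {x y : V}
    (hr : T.graph.Reachable x y) (S : Set K) (s : Sym2 V → ZMod 2)
    (hS : ∀ c ∈ S, ∃ ω : T.graph.Walk x y, T.Carries c ω ∧ ω.edgeParity = s) :
    ∃ ω : T.graph.Walk x y, ∀ c ∈ S, T.Carries c ω := by
  rcases eq_or_ne x y with rfl | hxy
  · refine ⟨.nil, fun c hc => ?_⟩
    obtain ⟨ω, hω, -⟩ := hS c hc
    exact Tabloid.carries_nil hω.mem_start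
  rcases S.eq_empty_or_nonempty with rfl | ⟨c₀, hc₀⟩
  · exact ⟨hr.some, by simp⟩
  obtain ⟨ω₀, -, rfl⟩ := hS c₀ hc₀
  obtain ⟨ω, hω⟩ := exists_walk_of_parityDegree_eq ω₀.edgeParity
    (fun e he => ω₀.edges_subset_edgeSet (Walk.mem_edges_of_edgeParity_ne_zero he)) hxy
    ω₀.parityDegree_edgeParity
  refine ⟨ω, fun c hc z hz => ?_⟩
  obtain ⟨e, he, hze⟩ := hω z hz
  obtain ⟨ωc, hωc, hpar⟩ := hS c hc
  rw [← hpar] at he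
  obtain ⟨t, rfl⟩ := Sym2.mem_iff_exists.mp hze
  exact hωc z (ωc.fst_mem_support_of_mem_edges (Walk.mem_edges_of_edgeParity_ne_zero he))

end EdgeParity

structure CoverPair (G : Tabloid L K V) (v₀ : V) where
  v : V
  label : Sym2 V → ZMod 2
  c : K
  mem : c ∈ G.consts v
  reachable : G.graph.Reachable v₀ v

section ParityCover

variable [DecidableEq V] (G : Tabloid L K V) (v₀ : V)

def coverSetoid : Setoid (CoverPair G v₀) where
  r p q := p.c = q.c ∧
    ∃ ω : G.graph.Walk p.v q.v, G.Carries p.c ω ∧ q.label = p.label + ω.edgeParity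
  iseqv.refl p := ⟨rfl, .nil, Tabloid.carries_nil p.mem, by simp⟩
  iseqv.symm := fun ⟨hc, ω, hω, hq⟩ => ⟨hc.symm, ω.reverse, hc ▸ hω.reverse, by
    rw [Walk.edgeParity_reverse, hq, add_assoc, ZModModule.add_self, add_zero]⟩
  iseqv.trans := fun ⟨hc, ω, hω, hq⟩ ⟨hc', ω', hω', hr⟩ => ⟨hc.trans hc', ω.append ω',
    hω.append (hc ▸ hω'), by rw [hr, hq, Walk.edgeParity_append, add_assoc]⟩

abbrev ParityCover : Type _ := Quotient (coverSetoid G v₀)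

instance [Finite K] [Finite V] : Finite (ParityCover G v₀) := by
  have : Finite (CoverPair G v₀) := Finite.of_injective (fun p => (p.v, p.label, p.c))
    fun ⟨_, _, _, _, _⟩ ⟨_, _, _, _, _⟩ h => by simp_all
  exact Quotient.finite _

variable {G v₀}

def ParityCover.mk (v : V) (h : Sym2 V → ZMod 2) (c : K) (hc : c ∈ G.consts v)
    (hr : G.graph.Reachable v₀ v) : ParityCover G v₀ :=
  ⟦⟨v, h, c, hc, hr⟩⟧

def ParityCover.cst : ParityCover G v₀ → K := Quotient.lift CoverPair.c fun _ _ h => h.1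

theorem ParityCover.mk_eq_mk_iff {v v' : V} {h h' : Sym2 V → ZMod 2} {c : K}
    {hc : c ∈ G.consts v} {hc' : c ∈ G.consts v'} {hr : G.graph.Reachable v₀ v}
    {hr' : G.graph.Reachable v₀ v'} :
    ParityCover.mk v h c hc hr = ParityCover.mk v' h' c hc' hr' ↔
      ∃ ω : G.graph.Walk v v', G.Carries c ω ∧ h' = h + ω.edgeParity :=
  Quotient.eq.trans (and_iff_right rfl)

variable (G v₀)

def parityCoverStructure [L.IsRelational] : L.Structure (ParityCover G v₀) where
  funMap f := isEmptyElim f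
  RelMap {n} R b := ∃ (v : V) (h : Sym2 V → ZMod 2) (cs : Fin n → K)
    (hcs : ∀ i, cs i ∈ G.consts v) (hr : G.graph.Reachable v₀ v),
      (∀ i, ParityCover.mk v h (cs i) (hcs i) hr = b i) ∧ G.rel v R cs

variable {G v₀}

theorem parityCoverStructure_relMap_mk_iff [Fintype V] [L.IsRelational] {v : V}
    (h : Sym2 V → ZMod 2) (hr : G.graph.Reachable v₀ v) {n : ℕ} (R : L.Relations n)
    (cs : Fin n → K) (hcs : ∀ i, cs i ∈ G.consts v) :
    (parityCoverStructure G v₀).RelMap R (fun i => ParityCover.mk v h (cs i) (hcs i) hr) ↔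
      G.rel v R cs := by
  refine ⟨fun ⟨w, h', cs', hcs', hr', hcls, hrel⟩ => ?_,
    fun hrel => ⟨v, h, _, hcs, hr, fun _ => rfl, hrel⟩⟩
  obtain rfl : cs = cs' := funext fun i => (congrArg ParityCover.cst (hcls i)).symm
  obtain ⟨ω, hω⟩ := G.exists_walk_carries_of_edgeParity_eq (hr'.symm.trans hr) (Set.range cs)
    (h - h') fun c ⟨i, hi⟩ => by
      obtain ⟨ω, hω, hpar⟩ := ParityCover.mk_eq_mk_iff.mp (hcls i)
      exact ⟨ω, hi ▸ hω, by rw [hpar]; abel⟩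
  exact G.rel_of_carries ω (fun i => hω _ ⟨i, rfl⟩) hrel

end ParityCover

section Bisimulation

variable [DecidableEq V] {G : Tabloid L K V} {v₀ : V}

open Classical in
noncomputable def nodeMap (u : Σ x, G.graph.Walk v₀ x) (h : Sym2 V → ZMod 2)
    (m : Quot (G.unravel v₀).keq) : ParityCover G v₀ :=
  if hm : (G.unravel v₀).cst m ∈ G.consts u.1 then ParityCover.mk u.1 h _ hm ⟨u.2⟩
  else ParityCover.mk m.out.1.1.1 0 m.out.1.2 m.out.2 ⟨m.out.1.1.2⟩

theorem nodeMap_cls (u : Σ x, G.graph.Walk v₀ x) (h : Sym2 V → ZMod 2) {c : K}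
    (hc : c ∈ G.consts u.1) :
    nodeMap u h ((G.unravel v₀).cls u c hc) = ParityCover.mk u.1 h c hc ⟨u.2⟩ :=
  dif_pos hc

variable [Fintype V] [Finite K] [L.IsRelational]

noncomputable def nodeIso (u : Σ x, G.graph.Walk v₀ x) (h : Sym2 V → ZMod 2) :
    PartialIso (G.unravel v₀).AT (parityCoverStructure G v₀) where
  dom := Set.range fun c : G.consts u.1 => (G.unravel v₀).cls u c c.2
  finite_dom := Set.finite_range _
  toFun := nodeMap u h
  injOn := by
    rintro _ ⟨c, rfl⟩ _ ⟨c', rfl⟩ hval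
    rw [nodeMap_cls, nodeMap_cls] at hval
    obtain rfl : c = c' := Subtype.ext (congrArg ParityCover.cst hval)
    rfl
  rel_iff := by
    intro n R a ha
    choose cs hcs using ha
    obtain rfl : a = fun i => (G.unravel v₀).cls u (cs i) (cs i).2 := funext fun i => (hcs i).symm
    simp only [nodeMap_cls]
    exact (Tabloid.AT_relMap_cls_iff (G.isTree_unravel v₀) R (fun i => (cs i : K))
      fun i => (cs i).2).trans (parityCoverStructure_relMap_mk_iff h ⟨u.2⟩ R _ _).symm

theorem nodeIso_forth (u : Σ x, G.graph.Walk v₀ x) (h : Sym2 V → ZMod 2)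
    (B₀ : Set (Quot (G.unravel v₀).keq)) (hB₀ : IsGuardedSet (G.unravel v₀).AT B₀) :
    ∃ w h', B₀ ⊆ (nodeIso w h').dom ∧
      ∀ x ∈ (nodeIso u h).dom ∩ (nodeIso w h').dom, nodeMap u h x = nodeMap w h' x := by
  classical
  obtain ⟨-, n, R, a, ⟨w, cs, hcs, hcls, -⟩, hsub⟩ := hB₀
  obtain ⟨P⟩ := (G.isTree_unravel v₀).connected u w
  refine ⟨w, h + (P.bypass.map (unravelingHom G.graph v₀)).edgeParity, ?_, ?_⟩
  · intro x hx
    obtain ⟨i, rfl⟩ := hsub hx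
    exact ⟨⟨cs i, hcs i⟩, hcls i⟩
  · rintro _ ⟨⟨⟨c, hc⟩, rfl⟩, ⟨⟨c', hc'⟩, hcc'⟩⟩
    obtain rfl : c' = c := congrArg (G.unravel v₀).cst hcc'
    rw [nodeMap_cls, ← hcc', nodeMap_cls]
    exact ParityCover.mk_eq_mk_iff.mpr ⟨_,
      (Tabloid.Carries.of_cls_eq (G.isTree_unravel v₀) hcc'.symm P.bypass_isPath).map_unravelingHom,
      rfl⟩

theorem nodeIso_back (u : Σ x, G.graph.Walk v₀ x) (h : Sym2 V → ZMod 2)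
    (B₁ : Set (ParityCover G v₀)) (hB₁ : IsGuardedSet (parityCoverStructure G v₀) B₁) :
    ∃ w h', B₁ ⊆ (nodeIso w h').rng ∧ ∀ x ∈ (nodeIso u h).dom, ∀ y ∈ (nodeIso w h').dom,
      nodeMap u h x = nodeMap w h' y → x = y := by
  obtain ⟨-, n, R, b, ⟨x, h', cs, hcs, hr, hcls, -⟩, hsub⟩ := hB₁
  obtain ⟨ω, hω⟩ := G.exists_walk_carries_of_edgeParity_eq (Reachable.symm ⟨u.2⟩ |>.trans hr)
    {c | ∃ (hc : c ∈ G.consts u.1) (hc' : c ∈ G.consts x),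
      ParityCover.mk u.1 h c hc ⟨u.2⟩ = ParityCover.mk x h' c hc' hr} (h' - h)
    fun c ⟨_, _, heq⟩ => by
      obtain ⟨ω, hω, hpar⟩ := ParityCover.mk_eq_mk_iff.mp heq
      exact ⟨ω, hω, by rw [hpar]; abel⟩
  refine ⟨⟨x, u.2.append ω⟩, h', ?_, ?_⟩
  · intro y hy
    obtain ⟨i, rfl⟩ := hsub hy
    exact ⟨_, ⟨⟨cs i, hcs i⟩, rfl⟩, (nodeMap_cls _ _ _).trans (hcls i)⟩
  · rintro _ ⟨⟨c, hc⟩, rfl⟩ _ ⟨⟨c', hc'⟩, rfl⟩ hval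
    rw [nodeMap_cls, nodeMap_cls] at hval
    obtain rfl : c = c' := congrArg ParityCover.cst hval
    exact G.unravel_cls_eq_of_carries u.2 (hω c ⟨hc, hc', hval⟩) hc hc'

variable (G v₀)

noncomputable def unravelBisim : GuardedBisim (G.unravel v₀).AT (parityCoverStructure G v₀) where
  Z := Set.range fun p : (Σ x, G.graph.Walk v₀ x) × (Sym2 V → ZMod 2) => nodeIso p.1 p.2
  nonempty := ⟨_, (⟨v₀, .nil⟩, 0), rfl⟩
  forth := by
    rintro _ ⟨⟨u, h⟩, rfl⟩ B₀ hB₀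
    obtain ⟨w, h', hdom, hagree⟩ := nodeIso_forth u h B₀ hB₀
    exact ⟨_, ⟨(w, h'), rfl⟩, hdom, hagree⟩
  back := by
    rintro _ ⟨⟨u, h⟩, rfl⟩ B₁ hB₁
    obtain ⟨w, h', hrng, hinj⟩ := nodeIso_back u h B₁ hB₁
    exact ⟨_, ⟨(w, h'), rfl⟩, hrng, hinj⟩

end Bisimulation

section Transport

variable {M N N' : Type*} {SM : L.Structure M} {SN : L.Structure N} {SN' : L.Structure N'}
  (e : N ≃ N')
  (he : ∀ {n : ℕ} (R : L.Relations n) (b : Fin n → N), SN'.RelMap R (e ∘ b) ↔ SN.RelMap R b)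
include he

def PartialIso.transport (α : PartialIso SM SN) : PartialIso SM SN' where
  dom := α.dom
  finite_dom := α.finite_dom
  toFun := e ∘ α.toFun
  injOn := e.injective.comp_injOn α.injOn
  rel_iff R a ha := (α.rel_iff R a ha).trans (he R _).symm

def GuardedBisim.transport (B : GuardedBisim SM SN) : GuardedBisim SM SN' where
  Z := PartialIso.transport e he '' B.Z
  nonempty := B.nonempty.image _
  forth := by
    rintro _ ⟨α, hα, rfl⟩ B₀ hB₀
    obtain ⟨γ, hγ, hdom, hagree⟩ := B.forth α hα B₀ hB₀
    exact ⟨_, ⟨γ, hγ, rfl⟩, hdom, fun x hx => congrArg e (hagree x hx)⟩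
  back := by
    rintro _ ⟨α, hα, rfl⟩ B₁ ⟨hne, n, R, b, hR, hsub⟩
    have hR' : SN.RelMap R (e.symm ∘ b) :=
      (he R _).mp (by rwa [← Function.comp_assoc, e.self_comp_symm])
    obtain ⟨γ, hγ, hrng, hinj⟩ := B.back α hα (e.symm '' B₁) ⟨hne.image _, n, R, _, hR',
      Set.image_subset_iff.mpr fun y hy => by
        obtain ⟨i, rfl⟩ := hsub hy
        exact ⟨i, rfl⟩⟩
    refine ⟨_, ⟨γ, hγ, rfl⟩, fun y hy => ?_, fun x hx y hy hxy => hinj x hx y hy (e.injective hxy)⟩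
    obtain ⟨m, hm, hm'⟩ := hrng ⟨y, hy, rfl⟩
    exact ⟨m, hm, (congrArg e hm').trans (e.apply_symm_apply y)⟩

end Transport

theorem unravel_gbisim_finite_structure_general {L : FirstOrder.Language} [L.IsRelational]
    {K V : Type*} [Finite K] [Finite V]
    (G : Tabloid L K V) (v₀ : V) :
    ∃ (N : Type) (SN : L.Structure N), Finite N ∧
      Nonempty (GuardedBisim (G.unravel v₀).AT SN) := by
  classical
  have := Fintype.ofFinite V
  obtain ⟨n, ⟨e⟩⟩ := Finite.exists_equiv_fin (ParityCover G v₀)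
  let := parityCoverStructure G v₀
  exact ⟨Fin n, e.inducedStructure, inferInstance,
    ⟨(unravelBisim G v₀).transport e fun R b => by simp [← Function.comp_assoc]⟩⟩

/-- For a finite nonempty tabloid `G` over a finite relational signature
and finite set of constants, with `T` its undirected unraveling from any node, the structure
`𝔄(T)` is guarded bisimilar to some finite structure. -/
theorem unravel_gbisim_finite_structure {L : FirstOrder.Language} [L.IsRelational]
    [Finite (Σ n : ℕ, L.Relations n)] {K V : Type*} [Finite K] [Finite V] [Nonempty V]
    (G : Tabloid L K V) (v₀ : V) :
    ∃ (N : Type) (SN : L.Structure N), Finite N ∧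
      Nonempty (GuardedBisim (G.unravel v₀).AT SN) :=
  unravel_gbisim_finite_structure_general G v₀

end GFPaper
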